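/- arXiv:2109.06821 — 2 statements merged into one kernel-verified Lean document; each statement's English description precedes it below -/
import Mathlib

section
/- Let I = (F_1,…,F_k) be an ideal in K[[x_1,…,x_n]], let μ be an integer with μ > max{|β| : β a vertex of N(I)}, and let J = (G_1,…,G_k) where j^μ G_i = j^μ F_i for all i (the G_i and F_i agree modulo m^{μ+1}). If H_I = H_J (equal Hilbert–Samuel functions), then N(I) = N(J). -/
noncomputable section
open MvPowerSeries

/-- The value of the positive linear form with coefficients `lam` at `β`. -/
def LamVal {n : ℕ} (lam : Fin n → ℕ) (β : Fin n →₀ ℕ) : ℕ := ∑ j, lam j * β j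

/-- The strict total order on `ℕ^n` induced by the positive linear form `lam`:
lexicographic comparison of `(Λ β, β₁, …, βₙ)`. -/
def LamLt {n : ℕ} (lam : Fin n → ℕ) (β γ : Fin n →₀ ℕ) : Prop :=
  LamVal lam β < LamVal lam γ ∨ (LamVal lam β = LamVal lam γ ∧ toLex ⇑β < toLex ⇑γ)

/-- `β` is the initial exponent of `F` w.r.t. the order induced by `lam`. -/
def IsInexp {n : ℕ} {K : Type*} [Field K] (lam : Fin n → ℕ)
    (F : MvPowerSeries (Fin n) K) (β : Fin n →₀ ℕ) : Prop :=
  coeff (R := K) β F ≠ 0 ∧ ∀ γ, coeff (R := K) γ F ≠ 0 → ¬ LamLt lam γ β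

/-- The diagram of initial exponents of an ideal. -/
def Diagram {n : ℕ} {K : Type*} [Field K] (lam : Fin n → ℕ)
    (I : Ideal (MvPowerSeries (Fin n) K)) : Set (Fin n →₀ ℕ) :=
  {β | ∃ F ∈ I, F ≠ 0 ∧ IsInexp lam F β}

/-- The ideal `n_{Λ,μ}` generated by the monomials `x^β` with `Λ(β) ≥ μ`. -/
def NIdeal {n : ℕ} (K : Type*) [Field K] (lam : Fin n → ℕ) (μ : ℕ) :
    Ideal (MvPowerSeries (Fin n) K) :=
  Ideal.span {F | ∃ β : Fin n →₀ ℕ, μ ≤ LamVal lam β ∧ F = monomial (R := K) β 1}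

/-- The maximal ideal `(x_1, …, x_n)` of `K[[x_1,…,x_n]]`. -/
def MaxId {n : ℕ} (K : Type*) [Field K] : Ideal (MvPowerSeries (Fin n) K) :=
  Ideal.span (Set.range (X : Fin n → MvPowerSeries (Fin n) K))

/-- `V` generates `N` under addition of arbitrary elements of `ℕ^n`. -/
def GeneratesDiag {n : ℕ} (V N : Set (Fin n →₀ ℕ)) : Prop :=
  {x | ∃ v ∈ V, ∃ β, x = v + β} = N

/-- `V` is the set of vertices of the diagram `N`. -/
def IsVertices {n : ℕ} (V : Finset (Fin n →₀ ℕ)) (N : Set (Fin n →₀ ℕ)) : Prop :=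
  ↑V ⊆ N ∧ GeneratesDiag ↑V N ∧
    ∀ W : Finset (Fin n →₀ ℕ), ↑W ⊆ N → GeneratesDiag ↑W N → V ⊆ W

/-- The Hilbert–Samuel function of `K[[x]]/I`. -/
def HSF {n : ℕ} {K : Type*} [Field K] (I : Ideal (MvPowerSeries (Fin n) K)) (η : ℕ) : ℕ :=
  Module.finrank K (MvPowerSeries (Fin n) K ⧸ (I + MaxId K ^ (η + 1)))

end

/-!
Every vertex `v` of `N(I)` is the initial exponent of some `∑ aᵢ Fᵢ`. The order compares total
degrees first and `|v| < μ`, so `∑ aᵢ Gᵢ`, which agrees with it up to degree `μ`, has the same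
initial exponent; as the diagram is generated by its vertices, `N(I) ⊆ N(J)`.

On the other hand, the monomials `x^β` with `|β| ≤ η` and `β ∉ N(I)` form a basis of
`K[[x]] / (I + m^{η+1})`: they are independent because a nonzero element of `I` has its initial
exponent in `N(I)`, and they span because any other `x^α`, `α ∈ N(I)`, can be traded modulo `I`
for monomials strictly larger in the order. Hence `H_I(η)` counts the exponents of degree `≤ η`
outside `N(I)`, and equal counts together with `N(I) ⊆ N(J)` force `N(I) = N(J)`.
-/

open MvPowerSeries MonomialOrder

theorem MvPowerSeries.mem_span_range_X_pow_iff {σ R : Type*} [Finite σ] [CommRing R] {d : ℕ}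
    {p : MvPowerSeries σ R} :
    p ∈ (Ideal.span (Set.range X) : Ideal (MvPowerSeries σ R)) ^ d ↔
      ∀ β : σ →₀ ℕ, β.degree < d → coeff β p = 0 := by
  -- In the `(X)`-adic completion of `R[X]`, which is `R⟦X⟧`, the `d`-th power of the ideal is
  -- the kernel of the evaluation at level `d`, i.e. of `truncTotal d`.
  set e := (toAdicCompletionAlgEquiv σ R).toRingEquiv
  have hmap : Ideal.map e (Ideal.span (Set.range X)) =
      (MvPolynomial.idealOfVars σ R).map (algebraMap ..) := by
    simp_rw [Ideal.map_span, ← Set.range_comp]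
    congr 2; ext1
    simp [e, AdicCompletion.algebraMap_apply, ← MvPolynomial.coe_X, toAdicCompletion_coe]
  rw [← Ideal.apply_mem_of_equiv_iff (f := e), Ideal.map_pow, hmap, ← Ideal.map_pow,
    ← Submodule.restrictScalars_mem (MvPolynomial σ R), ← Ideal.smul_top_eq_map,
    AdicCompletion.pow_smul_top_eq_ker_eval (MvPolynomial.idealOfVars_fg σ R),
    LinearMap.mem_ker, AdicCompletion.eval_apply]
  simp only [e, AlgEquiv.coe_ringEquiv, toAdicCompletionAlgEquiv_apply,
    toAdicCompletion_apply_eq_mk_truncTotal, smul_eq_mul, Ideal.mul_top,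
    Ideal.Quotient.eq_zero_iff_mem, MvPolynomial.mem_pow_idealOfVars_iff']
  exact forall₂_congr fun β hβ => by rw [coeff_truncTotal _ hβ]

lemma Ideal.exists_mem_span_range_sub_mem {R ι : Type*} [CommRing R] [Fintype ι]
    {F G : ι → R} {Q : Ideal R} (hFG : ∀ i, G i - F i ∈ Q) {H : R}
    (hH : H ∈ Ideal.span (Set.range F)) : ∃ H' ∈ Ideal.span (Set.range G), H' - H ∈ Q := by
  obtain ⟨a, rfl⟩ := (Submodule.mem_span_range_iff_exists_fun _).1 hH
  refine ⟨∑ i, a i * G i, Ideal.sum_mem _ fun i _ => Ideal.mul_mem_left _ _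
    (Ideal.subset_span ⟨i, rfl⟩), ?_⟩
  simp only [smul_eq_mul, ← Finset.sum_sub_distrib, ← mul_sub]
  exact Ideal.sum_mem _ fun i _ => Ideal.mul_mem_left _ _ (hFG i)

section Diagram

variable {n : ℕ} {K : Type*} [Field K]

lemma mem_maxId_pow_iff {d : ℕ} {p : MvPowerSeries (Fin n) K} :
    p ∈ MaxId K ^ d ↔ ∀ β : Fin n →₀ ℕ, β.degree < d → coeff β p = 0 :=
  mem_span_range_X_pow_iff

lemma coeff_eq_of_sub_mem_maxId_pow {d : ℕ} {p q : MvPowerSeries (Fin n) K}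
    (h : p - q ∈ MaxId K ^ d) {β : Fin n →₀ ℕ} (hβ : β.degree < d) :
    coeff β p = coeff β q := by
  rw [← sub_eq_zero, ← map_sub]
  exact mem_maxId_pow_iff.1 h β hβ

lemma lamVal_one (β : Fin n →₀ ℕ) : LamVal (fun _ => 1) β = β.degree := by
  simp [LamVal, Finsupp.degree_eq_sum]

lemma lamLt_one_iff {β γ : Fin n →₀ ℕ} : LamLt (fun _ => 1) β γ ↔ β ≺[degLex] γ := by
  rw [degLex_lt_iff, Finsupp.DegLex.lt_iff, LamLt, lamVal_one, lamVal_one]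
  rfl

lemma degree_le_of_degLex_le {β γ : Fin n →₀ ℕ} (h : β ≼[degLex] γ) : β.degree ≤ γ.degree :=
  Finsupp.DegLex.monotone_degree h

lemma isInexp_one_iff {F : MvPowerSeries (Fin n) K} {β : Fin n →₀ ℕ} :
    IsInexp (fun _ => 1) F β ↔ coeff β F ≠ 0 ∧ ∀ γ, coeff γ F ≠ 0 → β ≼[degLex] γ := by
  simp only [IsInexp, lamLt_one_iff, not_lt]

lemma exists_isInexp {F : MvPowerSeries (Fin n) K} (hF : F ≠ 0) :
    ∃ β, IsInexp (fun _ => 1) F β := by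
  obtain ⟨β, hβ, hmin⟩ := (InvImage.wf (degLex (σ := Fin n)).toSyn wellFounded_lt).has_min
    {β | coeff β F ≠ 0} (by simpa [Set.nonempty_def, ← not_forall] using fun h => hF (ext h))
  exact ⟨β, isInexp_one_iff.2 ⟨hβ, fun γ hγ => not_lt.1 (hmin γ hγ)⟩⟩

lemma IsInexp.monomial_mul {F : MvPowerSeries (Fin n) K} {β : Fin n →₀ ℕ}
    (hF : IsInexp (fun _ => 1) F β) (γ : Fin n →₀ ℕ) :
    IsInexp (fun _ => 1) (monomial γ 1 * F) (γ + β) := by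
  rw [isInexp_one_iff] at hF ⊢
  refine ⟨by simpa [coeff_monomial_mul] using hF.1, fun δ hδ => ?_⟩
  rw [coeff_monomial_mul] at hδ
  split_ifs at hδ with hγδ
  · have hβδ := hF.2 _ (by simpa using hδ)
    rw [← add_tsub_cancel_of_le hγδ]
    change degLex.toSyn (γ + β) ≤ degLex.toSyn (γ + (δ - γ))
    rwa [map_add, map_add, add_le_add_iff_left]
  · exact absurd rfl hδ

lemma IsInexp.of_coeff_eq {F G : MvPowerSeries (Fin n) K} {β : Fin n →₀ ℕ}
    (hF : IsInexp (fun _ => 1) F β)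
    (hFG : ∀ γ : Fin n →₀ ℕ, γ.degree ≤ β.degree → coeff γ G = coeff γ F) :
    IsInexp (fun _ => 1) G β := by
  rw [isInexp_one_iff] at hF ⊢
  refine ⟨by rw [hFG β le_rfl]; exact hF.1, fun γ hγ => ?_⟩
  by_contra! hlt
  have hγF := hFG γ (degree_le_of_degLex_le hlt.le) ▸ hγ
  exact absurd (hF.2 γ hγF) (not_le.2 hlt)

lemma IsInexp.degLex_lt_of_coeff_sub_ne_zero {H : MvPowerSeries (Fin n) K} {α γ : Fin n →₀ ℕ}
    (hH : IsInexp (fun _ => 1) H α)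
    (hγ : coeff γ (monomial α 1 - (coeff α H)⁻¹ • H) ≠ 0) : α ≺[degLex] γ := by
  rw [isInexp_one_iff] at hH
  rw [map_sub, coeff_monomial, map_smul, smul_eq_mul] at hγ
  split_ifs at hγ with hγα
  · subst hγα
    exact absurd (by rw [inv_mul_cancel₀ hH.1, sub_self]) hγ
  · have hHγ : coeff γ H ≠ 0 := fun h => hγ (by rw [h, mul_zero, sub_zero])
    exact lt_of_le_of_ne (hH.2 γ hHγ) (degLex.toSyn.injective.ne (Ne.symm hγα))

lemma add_mem_diagram {I : Ideal (MvPowerSeries (Fin n) K)} {β : Fin n →₀ ℕ}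
    (hβ : β ∈ Diagram (fun _ => 1) I) (γ : Fin n →₀ ℕ) : γ + β ∈ Diagram (fun _ => 1) I := by
  obtain ⟨F, hFI, -, hF⟩ := hβ
  have hγF := hF.monomial_mul γ
  exact ⟨_, I.mul_mem_left _ hFI, fun h => hγF.1 (by rw [h, map_zero]), hγF⟩

lemma diagram_subset_of_generatesDiag {V N : Set (Fin n →₀ ℕ)}
    {I : Ideal (MvPowerSeries (Fin n) K)} (hVN : GeneratesDiag V N)
    (hV : V ⊆ Diagram (fun _ => 1) I) : N ⊆ Diagram (fun _ => 1) I := by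
  rw [← hVN]
  rintro _ ⟨v, hv, β, rfl⟩
  rw [add_comm]
  exact add_mem_diagram (hV hv) β

lemma mem_diagram_of_sub_mem_maxId_pow {k μ : ℕ} {F G : Fin k → MvPowerSeries (Fin n) K}
    (hFG : ∀ i, G i - F i ∈ MaxId K ^ (μ + 1)) {v : Fin n →₀ ℕ}
    (hv : v ∈ Diagram (fun _ => 1) (Ideal.span (Set.range F))) (hvμ : v.degree ≤ μ) :
    v ∈ Diagram (fun _ => 1) (Ideal.span (Set.range G)) := by
  obtain ⟨H, hHI, -, hH⟩ := hv
  obtain ⟨H', hH'J, hH'H⟩ := Ideal.exists_mem_span_range_sub_mem hFG hHI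
  have hH' : IsInexp (fun _ => 1) H' v := hH.of_coeff_eq fun γ hγ =>
    coeff_eq_of_sub_mem_maxId_pow hH'H (by omega)
  exact ⟨H', hH'J, fun h => hH'.1 (by rw [h, map_zero]), hH'⟩

def diagramComplBelow (I : Ideal (MvPowerSeries (Fin n) K)) (η : ℕ) : Set (Fin n →₀ ℕ) :=
  {β | β.degree ≤ η ∧ β ∉ Diagram (fun _ => 1) I}

lemma diagramComplBelow_finite (I : Ideal (MvPowerSeries (Fin n) K)) (η : ℕ) :
    (diagramComplBelow I η).Finite :=
  (Finsupp.finite_of_degree_le η).subset fun _ h => h.1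

lemma mem_of_monomial_mem_of_maxId_pow_le (η : ℕ) {M : Submodule K (MvPowerSeries (Fin n) K)}
    (hM : (MaxId K ^ (η + 1)).restrictScalars K ≤ M) {F : MvPowerSeries (Fin n) K}
    (hF : ∀ γ : Fin n →₀ ℕ, γ.degree ≤ η → coeff γ F ≠ 0 → monomial γ 1 ∈ M) : F ∈ M := by
  set p := truncTotal (η + 1) F
  have hFp : F - p ∈ MaxId K ^ (η + 1) := mem_maxId_pow_iff.2 fun β hβ => by
    rw [map_sub, MvPolynomial.coeff_coe, coeff_truncTotal _ hβ, sub_self]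
  have hp : (p : MvPowerSeries (Fin n) K) ∈ M := by
    rw [p.as_sum, ← MvPolynomial.coeToMvPowerSeries.ringHom_apply, map_sum]
    refine sum_mem fun γ hγ => ?_
    rw [MvPolynomial.mem_support_iff, coeff_truncTotal_eq_ite] at hγ
    split_ifs at hγ with hγη
    · rw [MvPolynomial.coeToMvPowerSeries.ringHom_apply, MvPolynomial.coe_monomial,
        coeff_truncTotal _ hγη, ← mul_one (coeff γ F), ← smul_eq_mul, map_smul]
      exact M.smul_mem _ (hF γ (by omega) hγ)
    · exact absurd rfl hγ
  simpa using add_mem (hM hFp) hp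

section Counting

variable (I : Ideal (MvPowerSeries (Fin n) K)) (η : ℕ)

lemma exists_mem_diagram_coeff_ne_zero {P : MvPowerSeries (Fin n) K}
    (hP : P ∈ I + MaxId K ^ (η + 1)) {β : Fin n →₀ ℕ} (hβ : β.degree ≤ η)
    (hPβ : coeff β P ≠ 0) :
    ∃ α ∈ Diagram (fun _ => 1) I, α.degree ≤ β.degree ∧ coeff α P ≠ 0 := by
  obtain ⟨y, hy, z, hz, rfl⟩ := Submodule.mem_sup.1 hP
  have hz0 : ∀ γ : Fin n →₀ ℕ, γ.degree ≤ η → coeff γ z = 0 := fun γ hγ =>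
    mem_maxId_pow_iff.1 hz γ (by omega)
  have hyβ : coeff β y ≠ 0 := by simpa [hz0 β hβ] using hPβ
  have hy0 : y ≠ 0 := fun h => hyβ (by rw [h, map_zero])
  obtain ⟨α, hα⟩ := exists_isInexp hy0
  have hαβ := degree_le_of_degLex_le ((isInexp_one_iff.1 hα).2 β hyβ)
  exact ⟨α, ⟨y, hy, hy0, hα⟩, hαβ, by simpa [hz0 α (hαβ.trans hβ)] using hα.1⟩

lemma eq_zero_of_mem_restrictSupport_of_coe_mem {p : MvPolynomial (Fin n) K}
    (hp : p ∈ MvPolynomial.restrictSupport K (diagramComplBelow I η))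
    (hpQ : (p : MvPowerSeries (Fin n) K) ∈ I + MaxId K ^ (η + 1)) : p = 0 := by
  by_contra hp0
  obtain ⟨β, hβ⟩ := MvPolynomial.ne_zero_iff.1 hp0
  have hβS : β ∈ diagramComplBelow I η := hp (MvPolynomial.mem_support_iff.2 hβ)
  obtain ⟨α, hαN, -, hα⟩ := exists_mem_diagram_coeff_ne_zero I η hpQ hβS.1
    (by rwa [MvPolynomial.coeff_coe])
  rw [MvPolynomial.coeff_coe] at hα
  exact (hp (MvPolynomial.mem_support_iff.2 hα)).2 hαN

noncomputable def diagramComplSpan : Submodule K (MvPowerSeries (Fin n) K) :=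
  (MvPolynomial.restrictSupport K (diagramComplBelow I η)).map
      (MvPolynomial.coeToMvPowerSeries.algHom K).toLinearMap ⊔
    (I + MaxId K ^ (η + 1)).restrictScalars K

lemma le_diagramComplSpan :
    (I + MaxId K ^ (η + 1)).restrictScalars K ≤ diagramComplSpan I η :=
  le_sup_right

lemma monomial_mem_diagramComplSpan {α : Fin n →₀ ℕ} (hα : α.degree ≤ η) :
    monomial α 1 ∈ diagramComplSpan I η := by
  -- descending induction along `degLex` on the finitely many exponents of degree `≤ η`
  have hwf : {β : Fin n →₀ ℕ | β.degree ≤ η}.WellFoundedOn (Function.onFun (· > ·) degLex.toSyn) :=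
    Set.wellFoundedOn_image.1 ((Finsupp.finite_of_degree_le η).image _).wellFoundedOn
  refine hwf.induction (P := fun α => monomial α 1 ∈ diagramComplSpan I η) hα fun α hα ih => ?_
  by_cases hαN : α ∈ Diagram (fun _ => 1) I
  · obtain ⟨H, hHI, -, hH⟩ := hαN
    rw [← add_sub_cancel ((coeff α H)⁻¹ • H) (monomial α 1)]
    refine add_mem (le_diagramComplSpan I η (Submodule.mem_sup_left (I.smul_of_tower_mem _ hHI)))
      ?_
    exact mem_of_monomial_mem_of_maxId_pow_le η
      (fun _ hx => le_diagramComplSpan I η (Submodule.mem_sup_right hx))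
      fun γ hγ hγF => ih γ hγ (hH.degLex_lt_of_coeff_sub_ne_zero hγF)
  · exact Submodule.mem_sup_left ⟨MvPolynomial.monomial α 1,
      (MvPolynomial.monomial_mem_restrictSupport K).2 (.inl ⟨hα, hαN⟩), by simp⟩

lemma mem_diagramComplSpan (F : MvPowerSeries (Fin n) K) : F ∈ diagramComplSpan I η :=
  mem_of_monomial_mem_of_maxId_pow_le η
    (fun _ hx => le_diagramComplSpan I η (Submodule.mem_sup_right hx))
    fun _ hγ _ => monomial_mem_diagramComplSpan I η hγ

theorem hsf_eq_ncard_diagramComplBelow : HSF I η = (diagramComplBelow I η).ncard := by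
  let φ : MvPolynomial.restrictSupport K (diagramComplBelow I η) →ₗ[K]
      MvPowerSeries (Fin n) K ⧸ (I + MaxId K ^ (η + 1)) :=
    (Ideal.Quotient.mkₐ K _).toLinearMap ∘ₗ
      (MvPolynomial.coeToMvPowerSeries.algHom K).toLinearMap ∘ₗ Submodule.subtype _
  have hinj : Function.Injective φ := by
    rw [← LinearMap.ker_eq_bot, LinearMap.ker_eq_bot']
    rintro ⟨p, hp⟩ hφ
    exact Subtype.ext (eq_zero_of_mem_restrictSupport_of_coe_mem I η hp
      (Ideal.Quotient.eq_zero_iff_mem.1 hφ))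
  have hsurj : Function.Surjective φ := by
    intro x
    obtain ⟨F, rfl⟩ := Ideal.Quotient.mk_surjective x
    obtain ⟨_, ⟨p, hp, rfl⟩, q, hq, hpq⟩ := Submodule.mem_sup.1 (mem_diagramComplSpan I η F)
    have hq' : q ∈ I + MaxId K ^ (η + 1) := hq
    refine ⟨⟨p, hp⟩, Ideal.Quotient.eq.2 ?_⟩
    simpa [φ, ← hpq] using neg_mem hq'
  rw [HSF, ← (LinearEquiv.ofBijective φ ⟨hinj, hsurj⟩).finrank_eq,
    Module.finrank_eq_nat_card_basis (MvPolynomial.basisRestrictSupport K _),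
    Nat.card_coe_set_eq]

end Counting

theorem diagram_eq_of_subset_of_hsf_eq {I J : Ideal (MvPowerSeries (Fin n) K)}
    (hIJ : Diagram (fun _ => 1) I ⊆ Diagram (fun _ => 1) J) (hHS : ∀ η, HSF I η = HSF J η) :
    Diagram (fun _ => 1) I = Diagram (fun _ => 1) J := by
  have hcompl (η : ℕ) : diagramComplBelow J η = diagramComplBelow I η :=
    Set.eq_of_subset_of_ncard_le (fun β hβ => ⟨hβ.1, fun h => hβ.2 (hIJ h)⟩)
      (by rw [← hsf_eq_ncard_diagramComplBelow, ← hsf_eq_ncard_diagramComplBelow, hHS])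
      (diagramComplBelow_finite I η)
  refine hIJ.antisymm fun β hβJ => by_contra fun hβI => ?_
  have hβ : β ∈ diagramComplBelow J β.degree := hcompl _ ▸ ⟨le_rfl, hβI⟩
  exact hβ.2 hβJ

end Diagram

open MvPowerSeries in
/-- If `μ` exceeds the maximal total degree of a vertex of `N(I)`, the generators
of `J` agree with those of `I` modulo `m^{μ+1}`, and `H_I = H_J`, then
`N(I) = N(J)`. -/
theorem stmt10 {n : ℕ} {K : Type*} [Field K]
    (k : ℕ) (F G : Fin k → MvPowerSeries (Fin n) K)
    (V : Finset (Fin n →₀ ℕ))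
    (hV : IsVertices V (Diagram (fun _ => 1) (Ideal.span (Set.range F))))
    (μ : ℕ) (hμ : ∀ β ∈ V, (∑ j, β j) < μ)
    (hFG : ∀ i, G i - F i ∈ MaxId (n := n) K ^ (μ + 1))
    (hHS : ∀ η : ℕ, HSF (Ideal.span (Set.range F)) η = HSF (Ideal.span (Set.range G)) η) :
    Diagram (fun _ => 1) (Ideal.span (Set.range F)) =
      Diagram (fun _ => 1) (Ideal.span (Set.range G)) := by
  refine diagram_eq_of_subset_of_hsf_eq ?_ hHS
  refine diagram_subset_of_generatesDiag hV.2.1 fun v hv => ?_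
  refine mem_diagram_of_sub_mem_maxId_pow hFG (hV.1 hv) ?_
  rw [Finsupp.degree_eq_sum]
  exact (hμ v hv).le
end

section
/- Let I = (F_1,…,F_k) and J = (G_1,…,G_k) be ideals in ℂ[[x_1,…,x_n]] with j^μ G_i = j^μ F_i for all i, where μ > max{|β| : β a vertex of N(I)}. If N(I) = N(J), then the ideals of initial forms coincide: in*(I) = in*(J). -/
noncomputable section
open MvPowerSeries

/-- `P` is the initial form of `F`: the nonzero homogeneous part of `F` of
lowest total degree. -/
def IsInitialForm {n : ℕ} (F P : MvPowerSeries (Fin n) ℂ) : Prop :=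
  P ≠ 0 ∧ ∃ d : ℕ,
    (∀ β : Fin n →₀ ℕ, (∑ j, β j) = d → coeff (R := ℂ) β P = coeff (R := ℂ) β F) ∧
    (∀ β : Fin n →₀ ℕ, (∑ j, β j) ≠ d → coeff (R := ℂ) β P = 0) ∧
    (∀ β : Fin n →₀ ℕ, (∑ j, β j) < d → coeff (R := ℂ) β F = 0)

/-- The ideal of initial forms of an ideal `I ⊆ ℂ[[x]]`. -/
def InIdeal {n : ℕ} (I : Ideal (MvPowerSeries (Fin n) ℂ)) :
    Ideal (MvPowerSeries (Fin n) ℂ) :=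
  Ideal.span {P | ∃ F ∈ I, F ≠ 0 ∧ IsInitialForm F P}

end

namespace InitialForms

open MvPowerSeries Finsupp

theorem span_range_le_span_range_sup {R ι : Type*} [CommRing R] {f g : ι → R} {M : Ideal R}
    (h : ∀ i, f i - g i ∈ M) : Ideal.span (Set.range f) ≤ Ideal.span (Set.range g) ⊔ M :=
  Ideal.span_le.2 <| Set.range_subset_iff.2 fun i => by
    rw [← add_sub_cancel (g i) (f i)]
    exact Submodule.add_mem_sup (Ideal.subset_span ⟨i, rfl⟩) (h i)

theorem le_order_of_le_order_add {σ R : Type*} [Ring R] {G H : MvPowerSeries σ R} {d : ℕ∞}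
    (hGH : d ≤ (G + H).order) (hH : d ≤ H.order) : d ≤ G.order := by
  have h := min_order_le_add (f := G + H) (g := -H)
  rw [add_neg_cancel_right, order_neg] at h
  exact le_trans (le_min hGH hH) h

theorem le_order_of_mem_maxId_pow {n : ℕ} {K : Type*} [Field K] {H : MvPowerSeries (Fin n) K}
    {m : ℕ} (hH : H ∈ MaxId K ^ m) : (m : ℕ∞) ≤ H.order := by
  induction m generalizing H with
  | zero => exact bot_le
  | succ m ih =>
    have hMax : MaxId (n := n) K ≤ RingHom.ker (constantCoeff (σ := Fin n) (R := K)) :=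
      Ideal.span_le.2 <| Set.range_subset_iff.2 fun i => by simp
    rw [pow_succ] at hH
    refine Submodule.mul_induction_on hH (fun a ha b hb => ?_) (fun a b ha hb => ?_)
    · have hb1 : 1 ≤ b.order := one_le_order_iff_constCoeff_eq_zero.2 (hMax hb)
      calc ((m + 1 : ℕ) : ℕ∞) = m + 1 := by push_cast; rfl
        _ ≤ a.order + b.order := add_le_add (ih ha) hb1
        _ ≤ (a * b).order := le_order_mul
    · exact le_trans (le_min ha hb) min_order_le_add

theorem homogeneousComponent_monomial {σ R : Type*} [Semiring R] (γ : σ →₀ ℕ) (a : R) :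
    homogeneousComponent γ.degree (monomial γ a) = monomial γ a := by
  classical
  ext δ
  rw [coeff_homogeneousComponent, coeff_monomial]
  split_ifs <;> simp_all

section InitialFormsOfDegree

variable {σ K : Type*} [Field K]

def initialFormsOfDegree (I : Ideal (MvPowerSeries σ K)) (d : ℕ) :
    Submodule K (MvPowerSeries σ K) where
  carrier := {P | ∃ F ∈ I, ↑d ≤ F.order ∧ homogeneousComponent d F = P}
  zero_mem' := ⟨0, I.zero_mem, by simp, map_zero _⟩
  add_mem' := by
    rintro _ _ ⟨F, hF, hFd, rfl⟩ ⟨G, hG, hGd, rfl⟩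
    exact ⟨F + G, I.add_mem hF hG, le_trans (le_min hFd hGd) min_order_le_add, map_add _ _ _⟩
  smul_mem' := by
    rintro c _ ⟨F, hF, hFd, rfl⟩
    refine ⟨c • F, ?_, le_trans hFd le_order_smul, map_smul _ _ _⟩
    rw [smul_eq_C_mul]
    exact I.mul_mem_left _ hF

theorem monomial_mul_mem_initialFormsOfDegree {I : Ideal (MvPowerSeries σ K)} {d : ℕ}
    {H : MvPowerSeries σ K} (hH : H ∈ initialFormsOfDegree I d) (γ : σ →₀ ℕ) :
    monomial γ 1 * H ∈ initialFormsOfDegree I (γ.degree + d) := by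
  obtain ⟨F, hF, hFd, rfl⟩ := hH
  have hγ : (γ.degree : ℕ∞) ≤ (monomial γ (1 : K)).order :=
    (order_monomial_of_ne_zero one_ne_zero).ge
  refine ⟨monomial γ 1 * F, I.mul_mem_left _ hF, ?_, ?_⟩
  · push_cast
    exact le_trans (add_le_add hγ hFd) le_order_mul
  · rw [homogeneousComponent_mul_of_le_order hγ hFd, homogeneousComponent_monomial]

end InitialFormsOfDegree

section LexMin

variable {σ K : Type*} [LinearOrder σ] [WellFoundedLT σ] [Field K]

def IsLexMinExp (P : MvPowerSeries σ K) (β : σ →₀ ℕ) : Prop :=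
  coeff β P ≠ 0 ∧ ∀ γ : σ →₀ ℕ, toLex ⇑γ < toLex ⇑β → coeff γ P = 0

theorem exists_isLexMinExp {P : MvPowerSeries σ K} {s : Set (σ →₀ ℕ)} (hs : s.Finite)
    (hP : ∀ β, coeff β P ≠ 0 → β ∈ s) (hP0 : P ≠ 0) : ∃ β, IsLexMinExp P β := by
  obtain ⟨β₀, hβ₀⟩ : ∃ β, coeff β P ≠ 0 := by
    by_contra! h
    exact hP0 (ext h)
  obtain ⟨β, hβ, hmin⟩ := Set.exists_min_image {β | coeff β P ≠ 0} (fun β => toLex ⇑β)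
    (hs.subset hP) ⟨β₀, hβ₀⟩
  exact ⟨β, hβ, fun γ hγ => by_contra fun h => (hmin γ h).not_gt hγ⟩

theorem IsLexMinExp.lt_of_sub_smul {P Q : MvPowerSeries σ K} {β β' : σ →₀ ℕ}
    (hP : IsLexMinExp P β) (hQ : IsLexMinExp Q β)
    (h' : IsLexMinExp (P - (coeff β P / coeff β Q) • Q) β') : toLex ⇑β < toLex ⇑β' := by
  refine lt_of_not_ge fun hle => h'.1 ?_
  rcases hle.eq_or_lt with heq | hlt
  · rw [DFunLike.coe_injective (toLex.injective heq)]
    simp [div_mul_cancel₀ _ hQ.1]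
  · simp [hP.2 β' hlt, hQ.2 β' hlt]

theorem le_of_forall_exists_isLexMinExp {W L : Submodule K (MvPowerSeries σ K)}
    {s : Set (σ →₀ ℕ)} (hs : s.Finite) (hW : ∀ P ∈ W, ∀ β, coeff β P ≠ 0 → β ∈ s)
    (h : ∀ P ∈ W, ∀ β, IsLexMinExp P β → ∃ Q ∈ W ⊓ L, IsLexMinExp Q β) : W ≤ L := by
  have hwf : s.WellFoundedOn (Function.onFun (· > ·) fun β : σ →₀ ℕ => toLex ⇑β) :=
    Set.wellFoundedOn_image.1 (hs.image _).wellFoundedOn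
  suffices key : ∀ β ∈ s, ∀ P ∈ W, IsLexMinExp P β → P ∈ L by
    intro P hPW
    obtain rfl | hP0 := eq_or_ne P 0
    · exact L.zero_mem
    obtain ⟨β, hβ⟩ := exists_isLexMinExp hs (hW P hPW) hP0
    exact key β (hW P hPW β hβ.1) P hPW hβ
  intro β hβs
  refine hwf.induction (P := fun β => ∀ P ∈ W, IsLexMinExp P β → P ∈ L) hβs ?_
  intro β _ ih P hPW hP
  obtain ⟨Q, ⟨hQW, hQL⟩, hQ⟩ := h P hPW β hP
  set c := coeff β P / coeff β Q
  have hP'W : P - c • Q ∈ W := W.sub_mem hPW (W.smul_mem c hQW)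
  rw [← sub_add_cancel P (c • Q)]
  refine L.add_mem ?_ (L.smul_mem c hQL)
  obtain h0 | hP'0 := eq_or_ne (P - c • Q) 0
  · rw [h0]; exact L.zero_mem
  obtain ⟨β', hβ'⟩ := exists_isLexMinExp hs (hW _ hP'W) hP'0
  exact ih β' (hW _ hP'W β' hβ'.1) (hP.lt_of_sub_smul hQ hβ') _ hP'W hβ'

theorem IsLexMinExp.monomial_mul {H : MvPowerSeries σ K} {v : σ →₀ ℕ} (h : IsLexMinExp H v)
    (γ : σ →₀ ℕ) : IsLexMinExp (monomial γ 1 * H) (γ + v) := by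
  classical
  refine ⟨by simpa [coeff_monomial_mul] using h.1, fun δ hδ => ?_⟩
  rw [coeff_monomial_mul]
  split_ifs with hγδ
  · obtain ⟨ε, rfl⟩ := exists_add_of_le hγδ
    have hε : toLex ⇑ε < toLex ⇑v := by
      simpa only [coe_add, toLex_add, add_lt_add_iff_left] using hδ
    simp [h.2 ε hε]
  · rfl

end LexMin

section InIdeal

variable {n : ℕ}

theorem isInitialForm_iff {F P : MvPowerSeries (Fin n) ℂ} :
    IsInitialForm F P ↔ P ≠ 0 ∧ ∃ d : ℕ, ↑d ≤ F.order ∧ homogeneousComponent d F = P := by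
  simp only [IsInitialForm, ← degree_eq_sum]
  refine and_congr_right fun _ => exists_congr fun d => ⟨?_, ?_⟩
  · rintro ⟨hd, hne, hlt⟩
    refine ⟨le_order fun β hβ => hlt β (by exact_mod_cast hβ), ext fun β => ?_⟩
    rw [coeff_homogeneousComponent]
    split_ifs with h
    exacts [(hd β h).symm, (hne β h).symm]
  · rintro ⟨hd, rfl⟩
    refine ⟨fun β h => by rw [coeff_homogeneousComponent, if_pos h],
      fun β h => by rw [coeff_homogeneousComponent, if_neg h],
      fun β h => coeff_of_lt_order (lt_of_lt_of_le (by exact_mod_cast h) hd)⟩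

theorem inIdeal_le {I L : Ideal (MvPowerSeries (Fin n) ℂ)}
    (h : ∀ F ∈ I, ∀ d : ℕ, ↑d ≤ F.order → homogeneousComponent d F ∈ L) : InIdeal I ≤ L := by
  refine Ideal.span_le.2 fun P ⟨F, hF, _, hFP⟩ => ?_
  obtain ⟨-, d, hd, rfl⟩ := isInitialForm_iff.1 hFP
  exact h F hF d hd

theorem homogeneousComponent_mem_inIdeal {I : Ideal (MvPowerSeries (Fin n) ℂ)}
    {F : MvPowerSeries (Fin n) ℂ} {d : ℕ} (hF : F ∈ I) (hd : ↑d ≤ F.order) :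
    homogeneousComponent d F ∈ InIdeal I := by
  obtain h0 | h0 := eq_or_ne (homogeneousComponent d F) 0
  · rw [h0]; exact zero_mem _
  refine Ideal.subset_span ⟨F, hF, ?_, isInitialForm_iff.2 ⟨h0, d, hd, rfl⟩⟩
  rintro rfl
  exact h0 (map_zero _)

end InIdeal

section Diagram

variable {n : ℕ} {K : Type*} [Field K]

theorem lamVal_one (β : Fin n →₀ ℕ) : LamVal (fun _ => 1) β = β.degree := by
  simp [LamVal, degree_eq_sum]

theorem isInexp_one_iff {F : MvPowerSeries (Fin n) K} {β : Fin n →₀ ℕ} :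
    IsInexp (fun _ => 1) F β ↔
      ↑β.degree ≤ F.order ∧ IsLexMinExp (homogeneousComponent β.degree F) β := by
  simp only [IsInexp, LamLt, lamVal_one, IsLexMinExp, coeff_homogeneousComponent, if_true]
  constructor
  · rintro ⟨hβ, hmin⟩
    refine ⟨le_order fun γ hγ => ?_, hβ, fun γ hγ => ?_⟩
    · by_contra h
      exact hmin γ h (Or.inl (by exact_mod_cast hγ))
    · split_ifs with h
      · by_contra h'
        exact hmin γ h' (Or.inr ⟨h, hγ⟩)
      · rfl
  · rintro ⟨hd, hβ, hmin⟩
    refine ⟨hβ, fun γ hγ => ?_⟩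
    rintro (hlt | ⟨heq, hlex⟩)
    · exact hγ (coeff_of_lt_order (lt_of_lt_of_le (by exact_mod_cast hlt) hd))
    · exact hγ (by simpa [heq] using hmin γ hlex)

end Diagram

section StandardBasis

variable {n : ℕ}

theorem inIdeal_le_of_generatesDiag {I L : Ideal (MvPowerSeries (Fin n) ℂ)}
    {V : Set (Fin n →₀ ℕ)} (hV : GeneratesDiag V (Diagram (fun _ => 1) I))
    (hL : ∀ v ∈ V, ∃ F ∈ I, IsInexp (fun _ => 1) F v ∧ homogeneousComponent v.degree F ∈ L) :
    InIdeal I ≤ L := by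
  refine inIdeal_le fun F hF d hd => ?_
  suffices h : initialFormsOfDegree I d ≤ L.restrictScalars ℂ from h ⟨F, hF, hd, rfl⟩
  have hsupp : ∀ P ∈ initialFormsOfDegree I d, ∀ β, coeff β P ≠ 0 →
      β ∈ {β : Fin n →₀ ℕ | β.degree = d} := by
    rintro _ ⟨F, -, -, rfl⟩ β hβ
    by_contra h
    exact hβ (by rw [coeff_homogeneousComponent, if_neg (Set.notMem_ofPred_iff.1 h)])
  refine le_of_forall_exists_isLexMinExp (finite_of_degree_eq d) hsupp ?_
  rintro P hP β hβ
  have hβd : β.degree = d := hsupp P hP β hβ.1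
  obtain ⟨F, hF, hd, rfl⟩ := hP
  subst hβd
  have hβI : β ∈ Diagram (fun _ => 1) I := by
    have hinexp := isInexp_one_iff.2 ⟨hd, hβ⟩
    exact ⟨F, hF, fun h => hinexp.1 (by rw [h, map_zero]), hinexp⟩
  obtain ⟨v, hvV, γ, rfl⟩ := hV.symm.subset hβI
  obtain ⟨Fv, hFv, hinexp, hFvL⟩ := hL v hvV
  obtain ⟨hvd, hvmin⟩ := isInexp_one_iff.1 hinexp
  refine ⟨monomial γ 1 * homogeneousComponent v.degree Fv, ⟨?_, L.mul_mem_left _ hFvL⟩, ?_⟩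
  · rw [map_add, add_comm v.degree]
    exact monomial_mul_mem_initialFormsOfDegree ⟨Fv, hFv, hvd, rfl⟩ γ
  · rw [add_comm v]
    exact hvmin.monomial_mul γ

theorem homogeneousComponent_mem_inIdeal_of_mem_sup {I : Ideal (MvPowerSeries (Fin n) ℂ)}
    {F : MvPowerSeries (Fin n) ℂ} {d μ : ℕ} (hF : F ∈ I ⊔ MaxId ℂ ^ (μ + 1))
    (hd : ↑d ≤ F.order) (hdμ : d ≤ μ) : homogeneousComponent d F ∈ InIdeal I := by
  obtain ⟨G, hG, H, hH, rfl⟩ := Submodule.mem_sup.1 hF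
  have hHd : (d : ℕ∞) < H.order :=
    lt_of_lt_of_le (by exact_mod_cast Nat.lt_succ_of_le hdμ) (le_order_of_mem_maxId_pow hH)
  rw [map_add, homogeneousComponent_of_lt_order_eq_zero hHd, add_zero]
  exact homogeneousComponent_mem_inIdeal hG (le_order_of_le_order_add hd hHd.le)

theorem inIdeal_le_inIdeal_of_le_sup {I J : Ideal (MvPowerSeries (Fin n) ℂ)} {V : Set (Fin n →₀ ℕ)}
    {μ : ℕ} (hVI : V ⊆ Diagram (fun _ => 1) I) (hV : GeneratesDiag V (Diagram (fun _ => 1) I))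
    (hμ : ∀ v ∈ V, v.degree ≤ μ) (hIJ : I ≤ J ⊔ MaxId ℂ ^ (μ + 1)) : InIdeal I ≤ InIdeal J :=
  inIdeal_le_of_generatesDiag hV fun v hv => by
    obtain ⟨F, hF, -, hinexp⟩ := hVI hv
    exact ⟨F, hF, hinexp, homogeneousComponent_mem_inIdeal_of_mem_sup (hIJ hF)
      (isInexp_one_iff.1 hinexp).1 (hμ v hv)⟩

end StandardBasis

end InitialForms

open MvPowerSeries in
/-- If `I = (F_1,…,F_k)` and `J = (G_1,…,G_k)` in `ℂ[[x]]` with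
`j^μ G_i = j^μ F_i` for `μ` exceeding the maximal total degree of a vertex of
`N(I)`, and `N(I) = N(J)`, then `in*(I) = in*(J)`. -/
theorem stmt13 {n : ℕ} (k : ℕ) (F G : Fin k → MvPowerSeries (Fin n) ℂ)
    (V : Finset (Fin n →₀ ℕ))
    (hV : IsVertices V (Diagram (fun _ => 1) (Ideal.span (Set.range F))))
    (μ : ℕ) (hμ : ∀ β ∈ V, (∑ j, β j) < μ)
    (hFG : ∀ i, G i - F i ∈ MaxId (n := n) ℂ ^ (μ + 1))
    (hND : Diagram (fun _ => 1) (Ideal.span (Set.range F)) =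
      Diagram (fun _ => 1) (Ideal.span (Set.range G))) :
    InIdeal (Ideal.span (Set.range F)) = InIdeal (Ideal.span (Set.range G)) := by
  have hVμ : ∀ v ∈ (V : Set (Fin n →₀ ℕ)), v.degree ≤ μ := fun v hv =>
    (Finsupp.degree_eq_sum v ▸ hμ v hv).le
  have hIJ : Ideal.span (Set.range F) ≤ Ideal.span (Set.range G) ⊔ MaxId ℂ ^ (μ + 1) :=
    InitialForms.span_range_le_span_range_sup fun i => by simpa using neg_mem (hFG i)
  have hJI : Ideal.span (Set.range G) ≤ Ideal.span (Set.range F) ⊔ MaxId ℂ ^ (μ + 1) :=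
    InitialForms.span_range_le_span_range_sup hFG
  exact le_antisymm (InitialForms.inIdeal_le_inIdeal_of_le_sup hV.1 hV.2.1 hVμ hIJ)
    (InitialForms.inIdeal_le_inIdeal_of_le_sup (hND ▸ hV.1) (hND ▸ hV.2.1) hVμ hJI)
end
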